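/- A graph G admits an H_d-flow if and only if G admits an oriented d-cycle double cover. -/

import Mathlib

open scoped BigOperators

/-- `Hd d` : vectors in `ℝ^d` with exactly one coordinate `1`, one `-1`, rest `0`. -/
def Hd (d : ℕ) : Set (EuclideanSpace ℝ (Fin d)) :=
  {x | ∃ i j : Fin d, i ≠ j ∧ x i = 1 ∧ x j = -1 ∧ ∀ k, k ≠ i → k ≠ j → x k = 0}
/-- A flow on a graph, represented as an antisymmetric function on ordered pairs of vertices,
supported on edges, with conservation at every vertex. -/
def IsFlow {V : Type*} [Fintype V] {d : ℕ} (G : SimpleGraph V)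
    (f : V → V → EuclideanSpace ℝ (Fin d)) : Prop :=
  (∀ u v, f u v = - f v u) ∧ (∀ u v, ¬ G.Adj u v → f u v = 0) ∧ (∀ v, ∑ u, f v u = 0)

/-- `G` admits a flow with all edge values in the (symmetric) set `X`. -/
def HasFlowIn {V : Type*} [Fintype V] {d : ℕ} (G : SimpleGraph V)
    (X : Set (EuclideanSpace ℝ (Fin d))) : Prop :=
  ∃ f, IsFlow G f ∧ ∀ u v, G.Adj u v → f u v ∈ X
/-- An oriented `d`-cycle double cover: `d` integer circulations with values in `{-1,0,1}`
(each being an eulerian-oriented even subgraph, i.e. a directed cycle), such that every edge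
lies in exactly two of them (`∑ i, (c i u v)^2 = 2`) with opposite orientations
(`∑ i, c i u v = 0`). -/
def IsOrientedCDC {V : Type*} [Fintype V] (G : SimpleGraph V) {d : ℕ}
    (c : Fin d → V → V → ℤ) : Prop :=
  (∀ i u v, c i u v = - c i v u) ∧
  (∀ i u v, ¬ G.Adj u v → c i u v = 0) ∧
  (∀ i u v, c i u v = 1 ∨ c i u v = 0 ∨ c i u v = -1) ∧
  (∀ i v, ∑ u, c i v u = 0) ∧
  (∀ u v, G.Adj u v → (∑ i, (c i u v)^2 = 2 ∧ ∑ i, c i u v = 0))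

/-!
Read an `H_d`-flow coordinatewise: its `i`-th coordinate is an integer circulation `c i` with
values in `{-1, 0, 1}`, and an edge value `e_i - e_j` says exactly that the edge lies in the
`i`-th and `j`-th circulation with opposite orientations. For a vector with entries in
`{-1, 0, 1}`, being of the form `e_i - e_j` amounts to having two nonzero entries
(`∑ x_k ^ 2 = 2`) which cancel (`∑ x_k = 0`).
-/

section PlusMinusPair

variable {ι R : Type*}

/-- `x = e i - e j` for some `i ≠ j`; `x ∈ Hd d` unfolds to this predicate on coordinates. -/
def IsPlusMinusPair [One R] [Neg R] [Zero R] (x : ι → R) : Prop :=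
  ∃ i j, i ≠ j ∧ x i = 1 ∧ x j = -1 ∧ ∀ k, k ≠ i → k ≠ j → x k = 0

theorem IsPlusMinusPair.mem [One R] [Neg R] [Zero R] {x : ι → R} (hx : IsPlusMinusPair x)
    (k : ι) : x k = 1 ∨ x k = 0 ∨ x k = -1 := by
  obtain ⟨i, j, -, hi, hj, h0⟩ := hx
  by_cases hki : k = i
  · exact .inl (hki ▸ hi)
  by_cases hkj : k = j
  · exact .inr (.inr (hkj ▸ hj))
  exact .inr (.inl (h0 k hki hkj))

theorem isPlusMinusPair_intCast_iff [AddGroupWithOne R] [CharZero R] {x : ι → ℤ} :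
    IsPlusMinusPair (fun i => (x i : R)) ↔ IsPlusMinusPair x := by
  simp only [IsPlusMinusPair]
  norm_cast

theorem isPlusMinusPair_iff_sum_sq_eq_two_and_sum_eq_zero [Fintype ι] [DecidableEq ι]
    {x : ι → ℤ} (hx : ∀ k, x k = 1 ∨ x k = 0 ∨ x k = -1) :
    IsPlusMinusPair x ↔ ∑ k, x k ^ 2 = 2 ∧ ∑ k, x k = 0 := by
  constructor
  · rintro ⟨i, j, hij, hi, hj, h0⟩
    have h0' : ∀ k ∈ Finset.univ, k ≠ i ∧ k ≠ j → x k = 0 := fun k _ hk => h0 k hk.1 hk.2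
    rw [Finset.sum_eq_add_of_mem i j (Finset.mem_univ _) (Finset.mem_univ _) hij
      (fun k hk hk' => by simp [h0' k hk hk']),
      Finset.sum_eq_add_of_mem i j (Finset.mem_univ _) (Finset.mem_univ _) hij h0', hi, hj]
    norm_num
  · rintro ⟨hsq, hsum⟩
    set s := Finset.univ.filter (fun k => x k ≠ 0)
    have hcard : s.card = 2 := by
      have : ∑ k, x k ^ 2 = s.card := by
        rw [Finset.card_filter, Nat.cast_sum]
        refine Finset.sum_congr rfl fun k _ => ?_
        rcases hx k with h | h | h <;> simp [h]
      omega
    obtain ⟨i, j, hij, hs⟩ := Finset.card_eq_two.mp hcard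
    have hsupp : ∀ k, k ≠ i → k ≠ j → x k = 0 := fun k hki hkj => by
      simpa [s] using (by simp [hs, hki, hkj] : k ∉ s)
    have hi : x i ≠ 0 := by simpa [s] using (by simp [hs] : i ∈ s)
    have hj : x j ≠ 0 := by simpa [s] using (by simp [hs] : j ∈ s)
    have hij' : x i + x j = 0 := by
      rw [← Finset.sum_pair hij, ← hs, Finset.sum_filter_ne_zero, hsum]
    rcases hx i with h | h | h
    · exact ⟨i, j, hij, h, by omega, hsupp⟩
    · exact absurd h hi
    · exact ⟨j, i, hij.symm, by omega, h, fun k hkj hki => hsupp k hki hkj⟩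

end PlusMinusPair

section Flow

variable {V : Type*} [Fintype V] {d : ℕ} {G : SimpleGraph V}

def vecOfCoords (c : Fin d → V → V → ℤ) (u v : V) : EuclideanSpace ℝ (Fin d) :=
  WithLp.toLp 2 fun i => (c i u v : ℝ)

theorem isFlow_vecOfCoords_iff {c : Fin d → V → V → ℤ} :
    IsFlow G (vecOfCoords c) ↔ (∀ i u v, c i u v = -c i v u) ∧
      (∀ i u v, ¬ G.Adj u v → c i u v = 0) ∧ (∀ i v, ∑ u, c i v u = 0) := by
  simp only [IsFlow, vecOfCoords, WithLp.ext_iff, WithLp.ofLp_neg, WithLp.ofLp_zero,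
    WithLp.ofLp_sum, funext_iff, Pi.neg_apply, Pi.zero_apply, Finset.sum_apply, ← Int.cast_neg,
    ← Int.cast_sum, Int.cast_inj, Int.cast_eq_zero]
  exact and_congr ⟨fun h i u v => h u v i, fun h u v i => h i u v⟩ <| and_congr
    ⟨fun h i u v huv => h u v huv i, fun h u v huv i => h i u v huv⟩ forall_comm

theorem hasFlowIn_Hd_iff : HasFlowIn G (Hd d) ↔
    ∃ c : Fin d → V → V → ℤ, IsFlow G (vecOfCoords c) ∧
      ∀ u v, G.Adj u v → IsPlusMinusPair fun i => c i u v := by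
  constructor
  · rintro ⟨f, hflow, hmem⟩
    have hint : ∀ u v i, ∃ n : ℤ, (n : ℝ) = f u v i := by
      intro u v i
      by_cases huv : G.Adj u v
      · rcases IsPlusMinusPair.mem (hmem u v huv) i with h | h | h
        exacts [⟨1, by simp [h]⟩, ⟨0, by simp [h]⟩, ⟨-1, by simp [h]⟩]
      · exact ⟨0, by simp [hflow.2.1 u v huv]⟩
    choose c hc using hint
    obtain rfl : f = vecOfCoords fun i u v => c u v i := funext₂ fun u v => by
      ext i; exact (hc u v i).symm
    exact ⟨_, hflow, fun u v huv => isPlusMinusPair_intCast_iff.mp (hmem u v huv)⟩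
  · rintro ⟨c, hflow, hpm⟩
    exact ⟨vecOfCoords c, hflow, fun u v huv => isPlusMinusPair_intCast_iff.mpr (hpm u v huv)⟩

end Flow

theorem stmt6 {V : Type*} [Fintype V] (G : SimpleGraph V) (d : ℕ) :
    HasFlowIn G (Hd d) ↔ ∃ c : Fin d → V → V → ℤ, IsOrientedCDC G c := by
  rw [hasFlowIn_Hd_iff]
  refine exists_congr fun c => ?_
  rw [isFlow_vecOfCoords_iff]
  constructor
  · rintro ⟨⟨hanti, hsupp, hcons⟩, hpm⟩
    have htri : ∀ i u v, c i u v = 1 ∨ c i u v = 0 ∨ c i u v = -1 := fun i u v => by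
      by_cases huv : G.Adj u v
      · exact (hpm u v huv).mem i
      · exact .inr (.inl (hsupp i u v huv))
    exact ⟨hanti, hsupp, htri, hcons, fun u v huv =>
      (isPlusMinusPair_iff_sum_sq_eq_two_and_sum_eq_zero (htri · u v)).mp (hpm u v huv)⟩
  · rintro ⟨hanti, hsupp, htri, hcons, hedge⟩
    exact ⟨⟨hanti, hsupp, hcons⟩, fun u v huv =>
      (isPlusMinusPair_iff_sum_sq_eq_two_and_sum_eq_zero (htri · u v)).mpr (hedge u v huv)⟩
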